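/- (Abel's formula) Let p, q : I → ℝ be continuous with p(t) > 0 for all t ∈ I, and fix b ∈ I. If x and y are solutions on I of the self-adjoint equation D^α[p·D^α x](t) + q(t)·x(t) = 0, then for all t ∈ I, W(x,y)(t) = c·e_0(t,b)²/p(t), where c = p(b)·W(x,y)(b). -/

import Mathlib

/-
Put `g = p · W(x,y)` and `P_x = p · D^α x`, so that `g = x P_y - y P_x`. Solving
`D^α f = κ₁ f + κ₀ f'` for `f'` in both `x' P_y - y' P_x` and `x P_y' - y P_x'` (where the
equation gives `D^α P_x = -q x`, and the `q`-terms cancel) shows that each of them equals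
`-(κ₁/κ₀) g`. Hence `g' = -2 (κ₁/κ₀) g`, and the scalar linear equation integrates to
`g(t) = g(b) exp(-2 ∫_b^t κ₁/κ₀) = g(b) e₀(t,b)²`.
-/

open Set

/-- The conformable proportional derivative `D^α f(t) = κ₁(t) f(t) + κ₀(t) f'(t)`. -/
noncomputable def Dconf (κ₀ κ₁ : ℝ → ℝ) (f : ℝ → ℝ) (t : ℝ) : ℝ :=
  κ₁ t * f t + κ₀ t * deriv f t

/-- The conformable exponential `e_0(t,s) = exp(-∫_s^t κ₁/κ₀)`. -/
noncomputable def e0 (κ₀ κ₁ : ℝ → ℝ) (t s : ℝ) : ℝ :=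
  Real.exp (-(∫ τ in s..t, κ₁ τ / κ₀ τ))

/-- The conformable Wronskian `W(x,y)(t) = x(t) D^α y(t) - y(t) D^α x(t)`. -/
noncomputable def Wr (κ₀ κ₁ : ℝ → ℝ) (x y : ℝ → ℝ) (t : ℝ) : ℝ :=
  x t * Dconf κ₀ κ₁ y t - y t * Dconf κ₀ κ₁ x t

/-- `x` is a solution of the homogeneous self-adjoint equation
`D^α[p D^α x] + q x = 0` on `I`. -/
def IsSolutionSA (κ₀ κ₁ p q : ℝ → ℝ) (I : Set ℝ) (x : ℝ → ℝ) : Prop :=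
  (∀ t ∈ I, DifferentiableAt ℝ x t) ∧
  ContinuousOn (Dconf κ₀ κ₁ x) I ∧
  (∀ t ∈ I, DifferentiableAt ℝ (fun s => p s * Dconf κ₀ κ₁ x s) t) ∧
  ContinuousOn (Dconf κ₀ κ₁ (fun s => p s * Dconf κ₀ κ₁ x s)) I ∧
  ∀ t ∈ I, Dconf κ₀ κ₁ (fun s => p s * Dconf κ₀ κ₁ x s) t + q t * x t = 0

theorem eq_mul_exp_integral_of_hasDerivAt {I : Set ℝ} (hI : I.OrdConnected) {r g : ℝ → ℝ}
    (hr : ContinuousOn r I) (hg : ∀ s ∈ I, HasDerivAt g (r s * g s) s) {b t : ℝ}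
    (hb : b ∈ I) (ht : t ∈ I) : g t = g b * Real.exp (∫ s in b..t, r s) := by
  set F : ℝ → ℝ := fun u => ∫ s in b..u, r s
  have hJ : uIcc b t ⊆ I := hI.uIcc_subset hb ht
  have hF_cont : ContinuousOn F (uIcc b t) :=
    intervalIntegral.continuousOn_primitive_interval
      ((hr.mono hJ).integrableOn_compact isCompact_uIcc)
  have hr_at : ∀ u ∈ Ioo (min b t) (max b t), ContinuousAt r u := fun u hu =>
    (hr.mono hJ).continuousAt (Icc_mem_nhds hu.1 hu.2)
  have hF_deriv : ∀ s ∈ Ioo (min b t) (max b t), HasDerivAt F (r s) s := fun s hs =>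
    intervalIntegral.integral_hasDerivAt_right
      ((hr.mono (hI.uIcc_subset hb (hJ (Ioo_subset_Icc_self hs)))).intervalIntegrable)
      (ContinuousAt.stronglyMeasurableAtFilter isOpen_Ioo hr_at s hs) (hr_at s hs)
  set φ : ℝ → ℝ := fun u => g u * Real.exp (-F u)
  have hφ_cont : ContinuousOn φ (uIcc b t) :=
    (HasDerivAt.continuousOn fun s hs => hg s (hJ hs)).mul (hF_cont.neg.rexp)
  have hφ_deriv : ∀ s ∈ Ioo (min b t) (max b t), HasDerivWithinAt φ 0 (Ioi s) s := by
    intro s hs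
    have := (hg s (hJ (Ioo_subset_Icc_self hs))).mul (hF_deriv s hs).neg.exp
    exact (this.congr_deriv (by ring)).hasDerivWithinAt
  have hφ : φ t - φ b = 0 := by
    rw [← intervalIntegral.integral_eq_sub_of_hasDeriv_right hφ_cont hφ_deriv
      intervalIntegrable_const, intervalIntegral.integral_zero]
  simp only [φ, F, intervalIntegral.integral_same, Real.exp_zero, inv_one, mul_one,
    Real.exp_neg, sub_eq_zero] at hφ
  rw [← hφ, mul_assoc, inv_mul_cancel₀ (Real.exp_ne_zero _), mul_one]

theorem e0_sq (κ₀ κ₁ : ℝ → ℝ) (t s : ℝ) :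
    e0 κ₀ κ₁ t s ^ 2 = Real.exp (∫ τ in s..t, -2 * (κ₁ τ / κ₀ τ)) := by
  rw [e0, ← Real.exp_nat_mul, intervalIntegral.integral_const_mul]
  push_cast
  ring_nf

theorem hasDerivAt_mul_Wr {κ₀ κ₁ p q x y : ℝ → ℝ} {s : ℝ} (hκ₀ : κ₀ s ≠ 0)
    (hx : DifferentiableAt ℝ x s) (hy : DifferentiableAt ℝ y s)
    (hPx : DifferentiableAt ℝ (fun u => p u * Dconf κ₀ κ₁ x u) s)
    (hPy : DifferentiableAt ℝ (fun u => p u * Dconf κ₀ κ₁ y u) s)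
    (hx_eq : Dconf κ₀ κ₁ (fun u => p u * Dconf κ₀ κ₁ x u) s + q s * x s = 0)
    (hy_eq : Dconf κ₀ κ₁ (fun u => p u * Dconf κ₀ κ₁ y u) s + q s * y s = 0) :
    HasDerivAt (fun u => p u * Wr κ₀ κ₁ x y u)
      (-2 * (κ₁ s / κ₀ s) * (p s * Wr κ₀ κ₁ x y s)) s := by
  have hW : (fun u => p u * Wr κ₀ κ₁ x y u) =
      fun u => x u * (p u * Dconf κ₀ κ₁ y u) - y u * (p u * Dconf κ₀ κ₁ x u) := by
    funext u
    simp only [Wr]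
    ring
  rw [hW]
  refine ((hx.hasDerivAt.mul hPy.hasDerivAt).sub (hy.hasDerivAt.mul hPx.hasDerivAt)).congr_deriv ?_
  simp only [Dconf, Wr] at hx_eq hy_eq ⊢
  field_simp
  linear_combination x s * hy_eq - y s * hx_eq

theorem abels_formula_general
    (I : Set ℝ) (hIconn : I.OrdConnected)
    (κ₀ κ₁ : ℝ → ℝ)
    (hκ₀c : ContinuousOn κ₀ I) (hκ₁c : ContinuousOn κ₁ I)
    (hκ₀pos : ∀ t ∈ I, 0 < κ₀ t)
    (p q : ℝ → ℝ)
    (hp : ∀ t ∈ I, 0 < p t)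
    (b : ℝ) (hb : b ∈ I)
    (x y : ℝ → ℝ)
    (hx : IsSolutionSA κ₀ κ₁ p q I x)
    (hy : IsSolutionSA κ₀ κ₁ p q I y) :
    ∀ t ∈ I,
      Wr κ₀ κ₁ x y t = (p b * Wr κ₀ κ₁ x y b) * (e0 κ₀ κ₁ t b) ^ 2 / p t := by
  intro t ht
  have hr : ContinuousOn (fun s => -2 * (κ₁ s / κ₀ s)) I :=
    continuousOn_const.mul (hκ₁c.div hκ₀c fun s hs => (hκ₀pos s hs).ne')
  have hg : ∀ s ∈ I, HasDerivAt (fun u => p u * Wr κ₀ κ₁ x y u)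
      (-2 * (κ₁ s / κ₀ s) * (p s * Wr κ₀ κ₁ x y s)) s := fun s hs =>
    hasDerivAt_mul_Wr (hκ₀pos s hs).ne' (hx.1 s hs) (hy.1 s hs) (hx.2.2.1 s hs)
      (hy.2.2.1 s hs) (hx.2.2.2.2 s hs) (hy.2.2.2.2 s hs)
  rw [e0_sq, ← eq_mul_exp_integral_of_hasDerivAt hIconn hr hg hb ht]
  field_simp [(hp t ht).ne']

/-- Abel's formula: if `x, y` solve `D^α[p D^α x] + q x = 0` on the interval `I`,
then `W(x,y)(t) = c e₀(t,b)²/p(t)` with `c = p(b) W(x,y)(b)`. -/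
theorem abels_formula
    (I : Set ℝ) (hIconn : I.OrdConnected)
    (κ₀ κ₁ : ℝ → ℝ)
    (hκ₀c : ContinuousOn κ₀ I) (hκ₁c : ContinuousOn κ₁ I)
    (hκ₀pos : ∀ t ∈ I, 0 < κ₀ t) (hκ₁nn : ∀ t ∈ I, 0 ≤ κ₁ t)
    (p q : ℝ → ℝ)
    (hpc : ContinuousOn p I) (hqc : ContinuousOn q I)
    (hp : ∀ t ∈ I, 0 < p t)
    (b : ℝ) (hb : b ∈ I)
    (x y : ℝ → ℝ)
    (hx : IsSolutionSA κ₀ κ₁ p q I x)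
    (hy : IsSolutionSA κ₀ κ₁ p q I y) :
    ∀ t ∈ I,
      Wr κ₀ κ₁ x y t = (p b * Wr κ₀ κ₁ x y b) * (e0 κ₀ κ₁ t b) ^ 2 / p t :=
  abels_formula_general I hIconn κ₀ κ₁ hκ₀c hκ₁c hκ₀pos p q hp b hb x y hx hy
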